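/- arXiv:1312.3625 — 2 statements merged into one kernel-verified Lean document; each statement's English description precedes it below -/
import Mathlib

section
/- Let T be a random vector in R^k and S a random vector in R^d with finite second moments and E[S S'] invertible. Then E[T T'] = E[T S'] (E[S S'])^{-1} E[S T'] holds (as matrices) if and only if T = E[T S'] (E[S S'])^{-1} S almost surely. -/
open MeasureTheory Matrix

/-! With `B = E[T Sᵀ] E[S Sᵀ]⁻¹`, the residual `R = T - B S` is orthogonal to `S` in `L²`, so
`E[R Rᵀ] = E[T Tᵀ] - B E[S Tᵀ]`. The matrix identity therefore says `E[R Rᵀ] = 0`, and the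
diagonal of `E[R Rᵀ]` vanishes exactly when every component of `R` is zero almost surely. -/

namespace MeasureTheory

variable {Ω ι κ ν : Type*} [MeasurableSpace Ω] {μ : Measure Ω}

noncomputable def crossMoment (μ : Measure Ω) (X : Ω → ι → ℝ) (Y : Ω → κ → ℝ) : Matrix ι κ ℝ :=
  Matrix.of fun i j => ∫ ω, X ω i * Y ω j ∂μ

@[simp]
lemma crossMoment_apply (X : Ω → ι → ℝ) (Y : Ω → κ → ℝ) (i : ι) (j : κ) :
    crossMoment μ X Y i j = ∫ ω, X ω i * Y ω j ∂μ := rfl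

lemma crossMoment_transpose (X : Ω → ι → ℝ) (Y : Ω → κ → ℝ) :
    (crossMoment μ X Y)ᵀ = crossMoment μ Y X := by
  ext i j
  simp only [transpose_apply, crossMoment_apply, mul_comm]

lemma memLp_mulVec [Fintype κ] {p : ENNReal} {X : Ω → κ → ℝ} (hX : ∀ j, MemLp (X · j) p μ)
    (A : Matrix ι κ ℝ) (i : ι) : MemLp (fun ω => (A *ᵥ X ω) i) p μ := by
  simp only [mulVec, dotProduct]
  exact memLp_finsetSum _ fun j _ => (hX j).const_mul (A i j)

lemma crossMoment_sub_mulVec_left [Fintype ν] {X : Ω → ι → ℝ} {Y : Ω → κ → ℝ}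
    {Z : Ω → ν → ℝ} (hX : ∀ i, MemLp (X · i) 2 μ) (hY : ∀ j, MemLp (Y · j) 2 μ)
    (hZ : ∀ l, MemLp (Z · l) 2 μ) (A : Matrix ι ν ℝ) :
    crossMoment μ (fun ω => X ω - A *ᵥ Z ω) Y = crossMoment μ X Y - A * crossMoment μ Z Y := by
  ext i j
  have hZY : ∀ l, Integrable (fun ω => A i l * (Z ω l * Y ω j)) μ := fun l =>
    ((hZ l).integrable_mul (hY j)).const_mul (A i l)
  have hXY : Integrable (fun ω => X ω i * Y ω j) μ := (hX i).integrable_mul (hY j)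
  calc ∫ ω, (X ω - A *ᵥ Z ω) i * Y ω j ∂μ
      = ∫ ω, X ω i * Y ω j - ∑ l, A i l * (Z ω l * Y ω j) ∂μ := by
        simp only [Pi.sub_apply, mulVec, dotProduct, sub_mul, Finset.sum_mul, mul_assoc]
    _ = ∫ ω, X ω i * Y ω j ∂μ - ∑ l, A i l * ∫ ω, Z ω l * Y ω j ∂μ := by
        rw [integral_sub hXY (integrable_finsetSum _ fun l _ => hZY l),
          integral_finsetSum _ fun l _ => hZY l]
        simp only [integral_const_mul]

lemma crossMoment_sub_mulVec_right [Fintype ν] {X : Ω → ι → ℝ} {Y : Ω → κ → ℝ}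
    {Z : Ω → ν → ℝ} (hX : ∀ i, MemLp (X · i) 2 μ) (hY : ∀ j, MemLp (Y · j) 2 μ)
    (hZ : ∀ l, MemLp (Z · l) 2 μ) (A : Matrix κ ν ℝ) :
    crossMoment μ X (fun ω => Y ω - A *ᵥ Z ω) = crossMoment μ X Y - crossMoment μ X Z * Aᵀ := by
  rw [← crossMoment_transpose, crossMoment_sub_mulVec_left hY hX hZ, transpose_sub,
    transpose_mul, crossMoment_transpose, crossMoment_transpose]

lemma crossMoment_self_eq_zero_iff [Countable ι] {X : Ω → ι → ℝ} (hX : ∀ i, MemLp (X · i) 2 μ) :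
    crossMoment μ X X = 0 ↔ ∀ᵐ ω ∂μ, X ω = 0 := by
  refine ⟨fun h => ?_, fun h => ?_⟩
  · have hdiag : ∀ i, ∀ᵐ ω ∂μ, X ω i = 0 := fun i => by
      have hsq : ∫ ω, X ω i * X ω i ∂μ = 0 := congrFun (congrFun h i) i
      rw [integral_eq_zero_iff_of_nonneg (fun ω => mul_self_nonneg (X ω i))
        ((hX i).integrable_mul (hX i))] at hsq
      filter_upwards [hsq] with ω hω using mul_self_eq_zero.mp hω
    filter_upwards [ae_all_iff.mpr hdiag] with ω hω using funext hω
  · ext i j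
    refine integral_eq_zero_of_ae ?_
    filter_upwards [h] with ω hω
    simp [hω]

lemma crossMoment_residual_self [Fintype κ] {T : Ω → ι → ℝ} {S : Ω → κ → ℝ}
    (hT : ∀ i, MemLp (T · i) 2 μ) (hS : ∀ j, MemLp (S · j) 2 μ) {B : Matrix ι κ ℝ}
    (hB : B * crossMoment μ S S = crossMoment μ T S) :
    crossMoment μ (fun ω => T ω - B *ᵥ S ω) (fun ω => T ω - B *ᵥ S ω)
      = crossMoment μ T T - B * (crossMoment μ T S)ᵀ := by
  have hR : ∀ i, MemLp (fun ω => (T ω - B *ᵥ S ω) i) 2 μ := fun i =>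
    (hT i).sub (memLp_mulVec hS B i)
  have horth : crossMoment μ (fun ω => T ω - B *ᵥ S ω) S = 0 := by
    rw [crossMoment_sub_mulVec_left hT hS hS, hB, sub_self]
  rw [crossMoment_sub_mulVec_right hR hT hS, horth, Matrix.zero_mul, sub_zero,
    crossMoment_sub_mulVec_left hT hT hS, crossMoment_transpose]

end MeasureTheory

theorem cramer_rao_matrix_eq_iff_general
    {Ω : Type*} [MeasurableSpace Ω] (μ : Measure Ω)
    {k d : ℕ} (T : Ω → Fin k → ℝ) (S : Ω → Fin d → ℝ)
    (hT : ∀ i, MemLp (fun ω => T ω i) 2 μ)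
    (hS : ∀ j, MemLp (fun ω => S ω j) 2 μ)
    (ESS : Matrix (Fin d) (Fin d) ℝ) (hESS : ∀ i j, ESS i j = ∫ ω, S ω i * S ω j ∂μ)
    (ETS : Matrix (Fin k) (Fin d) ℝ) (hETS : ∀ i j, ETS i j = ∫ ω, T ω i * S ω j ∂μ)
    (ETT : Matrix (Fin k) (Fin k) ℝ) (hETT : ∀ i j, ETT i j = ∫ ω, T ω i * T ω j ∂μ)
    (hinv : IsUnit ESS) :
    ETT = ETS * ESS⁻¹ * ETSᵀ ↔ ∀ᵐ ω ∂μ, T ω = (ETS * ESS⁻¹).mulVec (S ω) := by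
  obtain rfl : ESS = crossMoment μ S S := Matrix.ext hESS
  obtain rfl : ETS = crossMoment μ T S := Matrix.ext hETS
  obtain rfl : ETT = crossMoment μ T T := Matrix.ext hETT
  set B := crossMoment μ T S * (crossMoment μ S S)⁻¹
  have hB : B * crossMoment μ S S = crossMoment μ T S := by
    rw [Matrix.mul_assoc, nonsing_inv_mul _ ((isUnit_iff_isUnit_det _).mp hinv), Matrix.mul_one]
  have hR : ∀ i, MemLp (fun ω => (T ω - B *ᵥ S ω) i) 2 μ := fun i =>
    (hT i).sub (memLp_mulVec hS B i)
  rw [← sub_eq_zero, ← crossMoment_residual_self hT hS hB,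
    crossMoment_self_eq_zero_iff hR]
  simp only [sub_eq_zero]

theorem cramer_rao_matrix_eq_iff
    {Ω : Type*} [MeasurableSpace Ω] (μ : Measure Ω) [IsProbabilityMeasure μ]
    {k d : ℕ} (T : Ω → Fin k → ℝ) (S : Ω → Fin d → ℝ)
    (hT : ∀ i, MemLp (fun ω => T ω i) 2 μ)
    (hS : ∀ j, MemLp (fun ω => S ω j) 2 μ)
    (ESS : Matrix (Fin d) (Fin d) ℝ) (hESS : ∀ i j, ESS i j = ∫ ω, S ω i * S ω j ∂μ)
    (ETS : Matrix (Fin k) (Fin d) ℝ) (hETS : ∀ i j, ETS i j = ∫ ω, T ω i * S ω j ∂μ)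
    (ETT : Matrix (Fin k) (Fin k) ℝ) (hETT : ∀ i j, ETT i j = ∫ ω, T ω i * T ω j ∂μ)
    (hinv : IsUnit ESS) :
    ETT = ETS * ESS⁻¹ * ETSᵀ ↔ ∀ᵐ ω ∂μ, T ω = (ETS * ESS⁻¹).mulVec (S ω) :=
  cramer_rao_matrix_eq_iff_general μ T S hT hS ESS hESS ETS hETS ETT hETT hinv
end

section
/- Let T ∈ R^k and S ∈ R^d be random vectors with finite second moments, E[S S'] invertible, and set G = E[T S'] (a k×d matrix). If the equality E[T T'] = G (E[S S'])^{-1} G' holds, then for every x ∈ R^k, the real random variable x'T lies almost surely in the linear span of the components S_1, …, S_d of S. -/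
/-!
Put `c = E[SSᵀ]⁻¹ Gᵀ x`, `f = xᵀT` and `g = cᵀS`. By bilinearity of the second moments,
`E[f²] = xᵀ E[TTᵀ] x`, `E[fg] = xᵀ G c` and `E[g²] = cᵀ E[SSᵀ] c = cᵀ Gᵀ x`, and the assumed
equality makes all three coincide. Hence `E[(f - g)²] = E[f²] - 2 E[fg] + E[g²] = 0`, so `f = g`
almost surely.
-/

open MeasureTheory Matrix

section SecondMoments

variable {Ω : Type*} [MeasurableSpace Ω] {μ : Measure Ω} {ι κ : Type*} [Fintype ι] [Fintype κ]

lemma memLp_dotProduct {p : ENNReal} {T : Ω → ι → ℝ} (hT : ∀ i, MemLp (fun ω => T ω i) p μ)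
    (x : ι → ℝ) : MemLp (fun ω => x ⬝ᵥ T ω) p μ := by
  simpa only [dotProduct] using memLp_finsetSum Finset.univ fun i _ => (hT i).const_mul (x i)

lemma integral_dotProduct_mul_dotProduct {T : Ω → ι → ℝ} {S : Ω → κ → ℝ}
    (hT : ∀ i, MemLp (fun ω => T ω i) 2 μ) (hS : ∀ j, MemLp (fun ω => S ω j) 2 μ)
    {M : Matrix ι κ ℝ} (hM : ∀ i j, M i j = ∫ ω, T ω i * S ω j ∂μ) (x : ι → ℝ) (y : κ → ℝ) :
    ∫ ω, (x ⬝ᵥ T ω) * (y ⬝ᵥ S ω) ∂μ = x ⬝ᵥ (M *ᵥ y) := by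
  have hint : ∀ i j, Integrable (fun ω => x i * (T ω i * S ω j) * y j) μ := fun i j =>
    (((hT i).integrable_mul (hS j)).const_mul (x i)).mul_const (y j)
  have hexpand : ∀ ω, (x ⬝ᵥ T ω) * (y ⬝ᵥ S ω) = ∑ i, ∑ j, x i * (T ω i * S ω j) * y j := by
    intro ω
    simp only [dotProduct, Finset.sum_mul_sum]
    exact Finset.sum_congr rfl fun i _ => Finset.sum_congr rfl fun j _ => by ring
  simp_rw [hexpand]
  rw [integral_finsetSum _ fun i _ => integrable_finsetSum _ fun j _ => hint i j]
  simp_rw [integral_finsetSum _ fun j _ => hint _ j, integral_mul_const, integral_const_mul,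
    dotProduct, mulVec, dotProduct, hM, Finset.mul_sum, mul_assoc]

lemma integral_sub_sq {f g : Ω → ℝ} (hf : MemLp f 2 μ) (hg : MemLp g 2 μ) :
    ∫ ω, (f ω - g ω) ^ 2 ∂μ
      = ∫ ω, f ω * f ω ∂μ - 2 * ∫ ω, f ω * g ω ∂μ + ∫ ω, g ω * g ω ∂μ := by
  have hff : Integrable (fun ω => f ω * f ω) μ := hf.integrable_mul hf
  have hfg : Integrable (fun ω => 2 * (f ω * g ω)) μ := (hf.integrable_mul hg).const_mul 2
  have hff_sub_hfg : Integrable (fun ω => f ω * f ω - 2 * (f ω * g ω)) μ := hff.sub hfg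
  have hgg : Integrable (fun ω => g ω * g ω) μ := hg.integrable_mul hg
  have hexpand : (fun ω => (f ω - g ω) ^ 2)
      = fun ω => f ω * f ω - 2 * (f ω * g ω) + g ω * g ω := by
    funext ω; ring
  rw [hexpand, integral_add hff_sub_hfg hgg, integral_sub hff hfg, integral_const_mul]

lemma ae_eq_of_integral_mul_eq {f g : Ω → ℝ} (hf : MemLp f 2 μ) (hg : MemLp g 2 μ)
    (hff : ∫ ω, f ω * f ω ∂μ = ∫ ω, f ω * g ω ∂μ) (hgg : ∫ ω, g ω * g ω ∂μ = ∫ ω, f ω * g ω ∂μ) :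
    f =ᵐ[μ] g := by
  have hsq_zero : ∫ ω, (f ω - g ω) ^ 2 ∂μ = 0 := by
    rw [integral_sub_sq hf hg, hff, hgg]
    ring
  have hsq : (fun ω => (f ω - g ω) ^ 2) =ᵐ[μ] 0 :=
    (integral_eq_zero_iff_of_nonneg (fun ω => sq_nonneg _) (hf.sub hg).integrable_sq).mp hsq_zero
  filter_upwards [hsq] with ω hω
  exact sub_eq_zero.mp (pow_eq_zero_iff two_ne_zero |>.mp hω)

end SecondMoments

theorem equality_implies_span_general
    {Ω : Type*} [MeasurableSpace Ω] (μ : Measure Ω)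
    {k d : ℕ} (T : Ω → Fin k → ℝ) (S : Ω → Fin d → ℝ)
    (hT : ∀ i, MemLp (fun ω => T ω i) 2 μ)
    (hS : ∀ j, MemLp (fun ω => S ω j) 2 μ)
    (ESS : Matrix (Fin d) (Fin d) ℝ) (hESS : ∀ i j, ESS i j = ∫ ω, S ω i * S ω j ∂μ)
    (hinv : IsUnit ESS)
    (G : Matrix (Fin k) (Fin d) ℝ) (hG : ∀ i j, G i j = ∫ ω, T ω i * S ω j ∂μ)
    (ETT : Matrix (Fin k) (Fin k) ℝ) (hETT : ∀ i j, ETT i j = ∫ ω, T ω i * T ω j ∂μ)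
    (heq : ETT = G * ESS⁻¹ * Gᵀ) :
    ∀ x : Fin k → ℝ, ∃ c : Fin d → ℝ, ∀ᵐ ω ∂μ, x ⬝ᵥ T ω = c ⬝ᵥ S ω := by
  intro x
  set c := ESS⁻¹ *ᵥ (Gᵀ *ᵥ x)
  have hESSc : ESS *ᵥ c = Gᵀ *ᵥ x := by
    rw [mulVec_mulVec, mul_nonsing_inv _ ((isUnit_iff_isUnit_det _).mp hinv), one_mulVec]
  refine ⟨c, ae_eq_of_integral_mul_eq (memLp_dotProduct hT x) (memLp_dotProduct hS c) ?_ ?_⟩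
  · rw [integral_dotProduct_mul_dotProduct hT hT hETT, integral_dotProduct_mul_dotProduct hT hS hG,
      heq, mulVec_mulVec, mulVec_mulVec]
  · rw [integral_dotProduct_mul_dotProduct hS hS hESS, integral_dotProduct_mul_dotProduct hT hS hG,
      hESSc, dotProduct_mulVec, vecMul_transpose, dotProduct_comm]

theorem equality_implies_span
    {Ω : Type*} [MeasurableSpace Ω] (μ : Measure Ω) [IsProbabilityMeasure μ]
    {k d : ℕ} (T : Ω → Fin k → ℝ) (S : Ω → Fin d → ℝ)
    (hT : ∀ i, MemLp (fun ω => T ω i) 2 μ)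
    (hS : ∀ j, MemLp (fun ω => S ω j) 2 μ)
    (ESS : Matrix (Fin d) (Fin d) ℝ) (hESS : ∀ i j, ESS i j = ∫ ω, S ω i * S ω j ∂μ)
    (hinv : IsUnit ESS)
    (G : Matrix (Fin k) (Fin d) ℝ) (hG : ∀ i j, G i j = ∫ ω, T ω i * S ω j ∂μ)
    (ETT : Matrix (Fin k) (Fin k) ℝ) (hETT : ∀ i j, ETT i j = ∫ ω, T ω i * T ω j ∂μ)
    (heq : ETT = G * ESS⁻¹ * Gᵀ) :
    ∀ x : Fin k → ℝ, ∃ c : Fin d → ℝ, ∀ᵐ ω ∂μ, x ⬝ᵥ T ω = c ⬝ᵥ S ω :=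
  equality_implies_span_general μ T S hT hS ESS hESS hinv G hG ETT hETT heq
end
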